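/- Let Q be an acyclic quiver with full commutativity relations presenting the incidence algebra A of a finite poset, and let I, J be intervals of Q. Then there exists a monomorphism of A-modules V_I → V_J if and only if I_0 is an up-set in J_0 (i.e., I_0 ⊆ J_0 and for a, b ∈ J_0 with a ⪯ b, a ∈ I_0 implies b ∈ I_0). -/

import Mathlib

set_option linter.unusedSectionVars false

open scoped Classical

/-- A persistence module over the poset `P`: a functor `P → Vect_k`.
(This models pointwise finite modules over the incidence algebra `A = kQ/ρ` of the poset.) -/
structure PersMod (k P : Type) [Field k] [PartialOrder P] where
  V : P → Type
  [acg : ∀ a, AddCommGroup (V a)]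
  [mod : ∀ a, Module k (V a)]
  map : ∀ {a b : P}, a ≤ b → (V a →ₗ[k] V b)
  map_id : ∀ a : P, map (le_refl a) = LinearMap.id
  map_comp : ∀ {a b c : P} (h₁ : a ≤ b) (h₂ : b ≤ c),
    (map h₂).comp (map h₁) = map (h₁.trans h₂)

attribute [instance] PersMod.acg PersMod.mod

variable {k P : Type} [Field k] [PartialOrder P]

/-- Morphisms of persistence modules, as a `k`-submodule of the product of Hom-spaces. -/
def PersHomSub (M N : PersMod k P) :
    Submodule k (∀ a : P, M.V a →ₗ[k] N.V a) where
  carrier := {f | ∀ ⦃a b : P⦄ (h : a ≤ b), (N.map h).comp (f a) = (f b).comp (M.map h)}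
  add_mem' := by
    intro f g hf hg a b h
    simp only [Pi.add_apply, LinearMap.comp_add, LinearMap.add_comp, hf h, hg h]
  zero_mem' := by intro a b h; simp
  smul_mem' := by
    intro c f hf a b h
    simp only [Pi.smul_apply, LinearMap.comp_smul, LinearMap.smul_comp, hf h]

/-- The space of morphisms `M → N` of persistence modules. -/
def PersHom (M N : PersMod k P) : Type := ↥(PersHomSub M N)

noncomputable instance (M N : PersMod k P) : AddCommGroup (PersHom M N) :=
  inferInstanceAs (AddCommGroup ↥(PersHomSub M N))
noncomputable instance (M N : PersMod k P) : Module k (PersHom M N) :=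
  inferInstanceAs (Module k ↥(PersHomSub M N))

/-- Composition of morphisms of persistence modules. -/
def PersHom.comp {M N O : PersMod k P} (g : PersHom N O) (f : PersHom M N) :
    PersHom M O :=
  ⟨fun a => (g.1 a).comp (f.1 a), by
    intro a b h
    rw [← LinearMap.comp_assoc, g.2 h, LinearMap.comp_assoc, f.2 h, LinearMap.comp_assoc]⟩

def IsMonoP {M N : PersMod k P} (f : PersHom M N) : Prop :=
  ∀ a : P, Function.Injective (f.1 a)

def IsEpiP {M N : PersMod k P} (f : PersHom M N) : Prop :=
  ∀ a : P, Function.Surjective (f.1 a)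

def IsIsoP {M N : PersMod k P} (f : PersHom M N) : Prop :=
  ∀ a : P, Function.Bijective (f.1 a)

/-- Convexity of a subset of the poset. -/
def IsConvexSet (I : Set P) : Prop :=
  ∀ ⦃a b c : P⦄, a ∈ I → c ∈ I → a ≤ b → b ≤ c → b ∈ I

/-- Zigzag-connectivity of a subset of the poset. -/
def IsConnectedSet (I : Set P) : Prop :=
  I.Nonempty ∧ ∀ a ∈ I, ∀ b ∈ I,
    Relation.ReflTransGen (fun x y => x ∈ I ∧ y ∈ I ∧ (x ≤ y ∨ y ≤ x)) a b

/-- An interval of the poset: a connected convex subset. -/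
def IsIntervalSet (I : Set P) : Prop := IsConvexSet I ∧ IsConnectedSet I

/-- The underlying linear map of the interval module. -/
noncomputable def intervalMap (I : Set P) (a b : P) :
    ↥(if a ∈ I then (⊤ : Submodule k k) else ⊥) →ₗ[k]
      ↥(if b ∈ I then (⊤ : Submodule k k) else ⊥) where
  toFun v := ⟨if a ∈ I ∧ b ∈ I then (v : k) else 0, by
    by_cases hb : b ∈ I
    · simp [hb]
    · have hab : ¬(a ∈ I ∧ b ∈ I) := fun h' => hb h'.2
      rw [if_neg hb, if_neg hab]; exact Submodule.zero_mem _⟩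
  map_add' v w := by
    apply Subtype.ext
    by_cases h' : a ∈ I ∧ b ∈ I <;> simp [h']
  map_smul' c v := by
    apply Subtype.ext
    by_cases h' : a ∈ I ∧ b ∈ I <;> simp [h']

@[simp] lemma intervalMap_coe (I : Set P) (a b : P)
    (v : ↥(if a ∈ I then (⊤ : Submodule k k) else ⊥)) :
    ((intervalMap I a b v : ↥(if b ∈ I then (⊤ : Submodule k k) else ⊥)) : k)
      = if a ∈ I ∧ b ∈ I then (v : k) else 0 := rfl

lemma intervalMem_zero {I : Set P} {a : P} (ha : a ∉ I)
    (v : ↥(if a ∈ I then (⊤ : Submodule k k) else ⊥)) : (v : k) = 0 := by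
  obtain ⟨x, hx⟩ := v
  rw [if_neg ha] at hx
  exact (Submodule.mem_bot k).1 hx

/-- The interval module `V_I` associated to a convex subset `I`. -/
noncomputable def intervalMod (I : Set P) (hI : IsConvexSet I) : PersMod k P where
  V a := ↥(if a ∈ I then (⊤ : Submodule k k) else ⊥)
  map {a b} _ := intervalMap I a b
  map_id a := by
    ext v
    rw [intervalMap_coe]
    by_cases ha : a ∈ I
    · simp [ha]
    · rw [if_neg (fun h => ha h.1)]; exact (intervalMem_zero ha v).symm
  map_comp {a b c} h₁ h₂ := by
    ext v
    rw [LinearMap.comp_apply, intervalMap_coe, intervalMap_coe, intervalMap_coe]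
    by_cases ha : a ∈ I <;> by_cases hb : b ∈ I <;> by_cases hc : c ∈ I <;>
      first
        | (exact absurd (hI ha hc h₁ h₂) hb)
        | simp [ha, hb, hc]

/-- Finite direct sums of persistence modules. -/
noncomputable def dSum {ι : Type} (M : ι → PersMod k P) : PersMod k P where
  V a := ∀ i, (M i).V a
  map {a b} h := LinearMap.pi fun i => ((M i).map h).comp (LinearMap.proj i)
  map_id a := by
    refine LinearMap.ext fun v => ?_
    funext i
    simp [LinearMap.pi_apply, (M i).map_id]
  map_comp {a b c} h₁ h₂ := by
    refine LinearMap.ext fun v => ?_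
    funext i
    simpa [LinearMap.pi_apply] using LinearMap.congr_fun ((M i).map_comp h₁ h₂) (v i)

/-- A persistence module is interval decomposable if it is isomorphic to a finite
direct sum of interval modules. -/
def IntervalDecomposable (W : PersMod k P) : Prop :=
  ∃ (n : ℕ) (J : Fin n → Set P) (hJ : ∀ i, IsIntervalSet (J i))
    (e : PersHom W (dSum fun i => intervalMod (J i) (hJ i).1)), IsIsoP e

/-- The combined morphism `⊕ᵢ Mᵢ → N` of a finite family of morphisms `Mᵢ → N`. -/
noncomputable def combineHom {ι : Type} [Fintype ι] {Mf : ι → PersMod k P}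
    {N : PersMod k P} (f : ∀ i, PersHom (Mf i) N) : PersHom (dSum Mf) N :=
  ⟨fun a => ∑ i, ((f i).1 a).comp (LinearMap.proj i), by
    intro a b h
    refine LinearMap.ext fun v => ?_
    simp only [LinearMap.comp_apply, LinearMap.sum_apply, LinearMap.proj_apply, map_sum]
    refine Finset.sum_congr rfl fun i _ => ?_
    have := LinearMap.congr_fun ((f i).2 h) (v i)
    exact this⟩

/-! The fibre of `V_I` at `a` is `k` for `a ∈ I` and `0` otherwise, and its structure maps inside `I`
are identities. A mono `V_I → V_J` is injective at each `a ∈ I`, which forces `a ∈ J`; by naturality,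
injectivity of the structure map of `V_J` along `a ≤ b` in `J` transfers to `V_I`, which forces
`b ∈ I` once `a ∈ I`. Conversely, for an up-set the fibrewise inclusions of `V_I` into `V_J` are
natural. -/

lemma PersHom.naturality {M N : PersMod k P} (f : PersHom M N) {a b : P} (h : a ≤ b)
    (v : M.V a) : N.map h (f.1 a v) = f.1 b (M.map h v) :=
  LinearMap.congr_fun (f.2 h) v

lemma IsMonoP.map_injective {M N : PersMod k P} {f : PersHom M N} (hf : IsMonoP f)
    {a b : P} (h : a ≤ b) (hN : Function.Injective (N.map h)) :
    Function.Injective (M.map h) := by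
  have hcomp : N.map h ∘ f.1 a = f.1 b ∘ M.map h := funext (f.naturality h)
  have : Function.Injective (f.1 b ∘ M.map h) := hcomp ▸ hN.comp (hf a)
  exact this.of_comp

lemma intervalMod_nontrivial_iff {I : Set P} (hI : IsConvexSet I) {a : P} :
    Nontrivial ((intervalMod I hI : PersMod k P).V a) ↔ a ∈ I := by
  refine ⟨fun hV => ?_, fun ha => ?_⟩
  · by_contra ha
    obtain ⟨v, w, hvw⟩ := hV.exists_pair_ne
    exact hvw (Subtype.ext ((intervalMem_zero ha v).trans (intervalMem_zero ha w).symm))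
  · exact ⟨⟨⟨1, by simp [ha]⟩, ⟨0, by simp [ha]⟩, fun h => one_ne_zero (congrArg Subtype.val h)⟩⟩

lemma intervalMod_map_val {I : Set P} (hI : IsConvexSet I) {a b : P} (h : a ≤ b)
    (v : (intervalMod I hI : PersMod k P).V a) :
    ((intervalMod I hI).map h v).1 = if a ∈ I ∧ b ∈ I then v.1 else 0 :=
  rfl

lemma intervalMod_map_injective {I : Set P} (hI : IsConvexSet I) {a b : P} (h : a ≤ b)
    (ha : a ∈ I) (hb : b ∈ I) :
    Function.Injective ((intervalMod I hI : PersMod k P).map h) := by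
  intro v w hvw
  have hvw' := congrArg Subtype.val hvw
  simp only [intervalMod_map_val, if_pos (And.intro ha hb)] at hvw'
  exact Subtype.ext hvw'

section Mono

variable {I J : Set P} {hI : IsConvexSet I} {hJ : IsConvexSet J}
  {f : PersHom (intervalMod I hI) (intervalMod J hJ : PersMod k P)}

lemma IsMonoP.subset_of_intervalMod (hf : IsMonoP f) : I ⊆ J := fun a ha =>
  have := (intervalMod_nontrivial_iff (k := k) hI).2 ha
  (intervalMod_nontrivial_iff hJ).1 (hf a).nontrivial

lemma IsMonoP.mem_of_intervalMod (hf : IsMonoP f) {a b : P} (ha : a ∈ J) (hb : b ∈ J)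
    (h : a ≤ b) (haI : a ∈ I) : b ∈ I :=
  have := (intervalMod_nontrivial_iff (k := k) hI).2 haI
  (intervalMod_nontrivial_iff hI).1
    (hf.map_injective h (intervalMod_map_injective hJ h ha hb)).nontrivial

end Mono

lemma intervalFiber_mono {I J : Set P} (hIJ : I ⊆ J) (a : P) :
    (if a ∈ I then (⊤ : Submodule k k) else ⊥) ≤ if a ∈ J then (⊤ : Submodule k k) else ⊥ := by
  by_cases ha : a ∈ I
  · rw [if_pos ha, if_pos (hIJ ha)]
  · rw [if_neg ha]
    exact bot_le

noncomputable def intervalModInclusion {I J : Set P} (hI : IsConvexSet I) (hJ : IsConvexSet J)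
    (hIJ : I ⊆ J) (hup : ∀ ⦃a b : P⦄, a ∈ J → b ∈ J → a ≤ b → a ∈ I → b ∈ I) :
    PersHom (intervalMod I hI) (intervalMod J hJ : PersMod k P) :=
  ⟨fun a => Submodule.inclusion (intervalFiber_mono hIJ a), by
    intro a b h
    ext v
    refine Subtype.ext (?_ : (if a ∈ J ∧ b ∈ J then v.1 else 0) = if a ∈ I ∧ b ∈ I then v.1 else 0)
    by_cases haI : a ∈ I
    · by_cases hbJ : b ∈ J
      · simp [hIJ haI, hbJ, haI, hup (hIJ haI) hbJ h haI]
      · have hbI : b ∉ I := fun hbI => hbJ (hIJ hbI)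
        simp [hbJ, hbI]
    · simp [intervalMem_zero haI v]⟩

lemma intervalModInclusion_isMono {I J : Set P} (hI : IsConvexSet I) (hJ : IsConvexSet J)
    (hIJ : I ⊆ J) (hup : ∀ ⦃a b : P⦄, a ∈ J → b ∈ J → a ≤ b → a ∈ I → b ∈ I) :
    IsMonoP (intervalModInclusion (k := k) hI hJ hIJ hup) :=
  fun a => Submodule.inclusion_injective (intervalFiber_mono hIJ a)

theorem mono_between_interval_modules_iff_upset_general
    {k P : Type} [Field k] [PartialOrder P]
    (I J : Set P) (hI : IsIntervalSet I) (hJ : IsIntervalSet J) :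
    (∃ f : PersHom (intervalMod I hI.1) (intervalMod J hJ.1 : PersMod k P), IsMonoP f) ↔
      (I ⊆ J ∧ ∀ ⦃a b : P⦄, a ∈ J → b ∈ J → a ≤ b → a ∈ I → b ∈ I) :=
  ⟨fun ⟨_, hf⟩ => ⟨hf.subset_of_intervalMod, fun _ _ => hf.mem_of_intervalMod⟩,
    fun ⟨hIJ, hup⟩ => ⟨_, intervalModInclusion_isMono hI.1 hJ.1 hIJ hup⟩⟩

/-- For intervals `I, J` of the poset, there exists a monomorphism of
modules `V_I → V_J` iff `I` is an up-set in `J`. -/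
theorem mono_between_interval_modules_iff_upset
    {k P : Type} [Field k] [PartialOrder P] [Fintype P]
    (I J : Set P) (hI : IsIntervalSet I) (hJ : IsIntervalSet J) :
    (∃ f : PersHom (intervalMod I hI.1) (intervalMod J hJ.1 : PersMod k P), IsMonoP f) ↔
      (I ⊆ J ∧ ∀ ⦃a b : P⦄, a ∈ J → b ∈ J → a ≤ b → a ∈ I → b ∈ I) :=
  mono_between_interval_modules_iff_upset_general I J hI hJ
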